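/- For functors L: A → B and R: B → A, (L, R) admits regular pairings (L, R, α, β) and (R, L, α̃, β̃) with splitting idempotents satisfying ℓ = ℓ̃ and r = r̃ if and only if there exist retractions underline{L} →i L →p underline{L} and underline{R} →i' R →p' underline{R} such that (underline{L}, underline{R}) is a Frobenius pair of functors (i.e., underline{L} is left and right adjoint to underline{R}). -/

import Mathlib

/-!
If `(η, ε)` is regular, then `β ∘ α = ℓ ≫ -` and `α ∘ β = - ≫ r` act as the identity on the
images of `α` and `β`. So when `ℓ = pL ≫ iL` and `r = pR ≫ iR` split, `f ↦ α (pL ≫ f) ≫ pR`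
and `g ↦ iL ≫ β (g ≫ iR)` are mutually inverse natural bijections
`(L' X ⟶ Y) ≃ (X ⟶ R' Y)`, i.e. `L' ⊣ R'`. Conversely an adjunction `L' ⊣ R'` between retracts
induces the regular pairing `η = R iL · iR L' · unit`, `ε = counit · L' pR · pL R`, whose
idempotents are `pL ≫ iL` and `pR ≫ iR`. For the opposite pairing the roles of `ℓ` and `r` swap,
so applying both constructions to `L' ⊣ R'` and `R' ⊣ L'` gives `ℓ = ℓ̃` and `r = r̃`.
-/

open CategoryTheory

universe v₁ u₁ v₂ u₂

section

variable {A : Type u₁} [Category.{v₁} A] {B : Type u₂} [Category.{v₂} B]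
variable (L : A ⥤ B) (R : B ⥤ A)

def pairingAlpha (η : 𝟭 A ⟶ L ⋙ R) {X : A} {Y : B} (f : L.obj X ⟶ Y) : X ⟶ R.obj Y :=
  η.app X ≫ R.map f

def pairingBeta (ε : R ⋙ L ⟶ 𝟭 B) {X : A} {Y : B} (g : X ⟶ R.obj Y) : L.obj X ⟶ Y :=
  L.map g ≫ ε.app Y

/-- The map `α̃ : Mor_A(R Y, X) → Mor_B(Y, L X)` of the opposite pairing, from `η̃`. -/
def pairingAlphaT (ηt : 𝟭 B ⟶ R ⋙ L) {Y : B} {X : A} (f : R.obj Y ⟶ X) : Y ⟶ L.obj X :=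
  ηt.app Y ≫ L.map f

/-- The map `β̃ : Mor_B(Y, L X) → Mor_A(R Y, X)` of the opposite pairing, from `ε̃`. -/
def pairingBetaT (εt : L ⋙ R ⟶ 𝟭 A) {Y : B} {X : A} (g : Y ⟶ L.obj X) : R.obj Y ⟶ X :=
  R.map g ≫ εt.app X

/-- `ℓ := εL·Lη`. -/
def pairingEll (η : 𝟭 A ⟶ L ⋙ R) (ε : R ⋙ L ⟶ 𝟭 B) (X : A) : L.obj X ⟶ L.obj X :=
  L.map (η.app X) ≫ ε.app (L.obj X)

/-- `r := Rε·ηR`. -/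
def pairingR (η : 𝟭 A ⟶ L ⋙ R) (ε : R ⋙ L ⟶ 𝟭 B) (Y : B) : R.obj Y ⟶ R.obj Y :=
  η.app (R.obj Y) ≫ R.map (ε.app Y)

/-- `ℓ̃ := Lε̃·η̃L`. -/
def pairingEllT (ηt : 𝟭 B ⟶ R ⋙ L) (εt : L ⋙ R ⟶ 𝟭 A) (X : A) : L.obj X ⟶ L.obj X :=
  ηt.app (L.obj X) ≫ L.map (εt.app X)

/-- `r̃ := ε̃R·Rη̃`. -/
def pairingRT (ηt : 𝟭 B ⟶ R ⋙ L) (εt : L ⋙ R ⟶ 𝟭 A) (Y : B) : R.obj Y ⟶ R.obj Y :=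
  R.map (ηt.app Y) ≫ εt.app (R.obj Y)

def IsRegularPairing (η : 𝟭 A ⟶ L ⋙ R) (ε : R ⋙ L ⟶ 𝟭 B) : Prop :=
  (∀ (X : A) (Y : B) (f : L.obj X ⟶ Y),
    pairingAlpha L R η (pairingBeta L R ε (pairingAlpha L R η f)) = pairingAlpha L R η f) ∧
  (∀ (X : A) (Y : B) (g : X ⟶ R.obj Y),
    pairingBeta L R ε (pairingAlpha L R η (pairingBeta L R ε g)) = pairingBeta L R ε g)

section

variable {L R}

theorem pairingAlpha_comp (η : 𝟭 A ⟶ L ⋙ R) {X : A} {Y Y' : B} (f : L.obj X ⟶ Y)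
    (g : Y ⟶ Y') :
    pairingAlpha L R η (f ≫ g) = pairingAlpha L R η f ≫ R.map g := by
  simp [pairingAlpha]

theorem pairingBeta_comp (ε : R ⋙ L ⟶ 𝟭 B) {X' X : A} {Y : B} (f : X' ⟶ X)
    (g : X ⟶ R.obj Y) :
    pairingBeta L R ε (f ≫ g) = L.map f ≫ pairingBeta L R ε g := by
  simp [pairingBeta]

theorem pairingBeta_pairingAlpha (η : 𝟭 A ⟶ L ⋙ R) (ε : R ⋙ L ⟶ 𝟭 B) {X : A} {Y : B}
    (f : L.obj X ⟶ Y) :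
    pairingBeta L R ε (pairingAlpha L R η f) = pairingEll L R η ε X ≫ f := by
  simp only [pairingAlpha, pairingBeta, pairingEll, Functor.map_comp, Category.assoc]
  exact congrArg _ (ε.naturality f)

theorem pairingAlpha_pairingBeta (η : 𝟭 A ⟶ L ⋙ R) (ε : R ⋙ L ⟶ 𝟭 B) {X : A} {Y : B}
    (g : X ⟶ R.obj Y) :
    pairingAlpha L R η (pairingBeta L R ε g) = g ≫ pairingR L R η ε Y := by
  simp only [pairingAlpha, pairingBeta, pairingR, Functor.map_comp]
  exact (η.naturality_assoc g _).symm

theorem pairingAlpha_comp_pairingR {η : 𝟭 A ⟶ L ⋙ R} {ε : R ⋙ L ⟶ 𝟭 B}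
    (h : IsRegularPairing L R η ε) {X : A} {Y : B} (f : L.obj X ⟶ Y) :
    pairingAlpha L R η f ≫ pairingR L R η ε Y = pairingAlpha L R η f := by
  rw [← pairingAlpha_pairingBeta, h.1]

theorem pairingEll_comp_pairingBeta {η : 𝟭 A ⟶ L ⋙ R} {ε : R ⋙ L ⟶ 𝟭 B}
    (h : IsRegularPairing L R η ε) {X : A} {Y : B} (g : X ⟶ R.obj Y) :
    pairingEll L R η ε X ≫ pairingBeta L R ε g = pairingBeta L R ε g := by
  rw [← pairingBeta_pairingAlpha, h.2]

def adjunctionOfSplitRegularPairing {η : 𝟭 A ⟶ L ⋙ R} {ε : R ⋙ L ⟶ 𝟭 B}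
    {L' : A ⥤ B} {R' : B ⥤ A} {pL : L ⟶ L'} {iL : L' ⟶ L} {pR : R ⟶ R'} {iR : R' ⟶ R}
    (h : IsRegularPairing L R η ε)
    (hℓ : ∀ X : A, pL.app X ≫ iL.app X = pairingEll L R η ε X)
    (hiL : ∀ X : A, iL.app X ≫ pL.app X = 𝟙 (L'.obj X))
    (hr : ∀ Y : B, pR.app Y ≫ iR.app Y = pairingR L R η ε Y)
    (hiR : ∀ Y : B, iR.app Y ≫ pR.app Y = 𝟙 (R'.obj Y)) :
    L' ⊣ R' :=
  Adjunction.mkOfHomEquiv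
    { homEquiv X Y :=
        { toFun f := pairingAlpha L R η (pL.app X ≫ f) ≫ pR.app Y
          invFun g := iL.app X ≫ pairingBeta L R ε (g ≫ iR.app Y)
          left_inv f := by
            dsimp only
            rw [Category.assoc, hr, pairingAlpha_comp_pairingR h, pairingBeta_pairingAlpha,
              ← hℓ]
            simp [reassoc_of% hiL]
          right_inv g := by
            dsimp only
            rw [← Category.assoc, hℓ, pairingEll_comp_pairingBeta h, pairingAlpha_pairingBeta,
              ← hr]
            simp [hiR, reassoc_of% hiR] }
      homEquiv_naturality_left_symm f g := by
        simp only [Equiv.coe_fn_symm_mk, pairingBeta_comp, Functor.map_comp, Category.assoc,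
          iL.naturality_assoc]
      homEquiv_naturality_right f g := by
        simp only [Equiv.coe_fn_mk, pairingAlpha_comp, Functor.map_comp, Category.assoc,
          pR.naturality] }

section

variable {L' : A ⥤ B} {R' : B ⥤ A} (adj : L' ⊣ R')

def CategoryTheory.Adjunction.retractPairingUnit (iL : L' ⟶ L) (iR : R' ⟶ R) :
    𝟭 A ⟶ L ⋙ R :=
  adj.unit ≫ Functor.whiskerLeft L' iR ≫ Functor.whiskerRight iL R

def CategoryTheory.Adjunction.retractPairingCounit (pL : L ⟶ L') (pR : R ⟶ R') :
    R ⋙ L ⟶ 𝟭 B :=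
  Functor.whiskerLeft R pL ≫ Functor.whiskerRight pR L' ≫ adj.counit

variable {pL : L ⟶ L'} {iL : L' ⟶ L} {pR : R ⟶ R'} {iR : R' ⟶ R}

theorem pairingAlpha_retractPairingUnit {X : A} {Y : B} (f : L.obj X ⟶ Y) :
    pairingAlpha L R (adj.retractPairingUnit iL iR) f =
      adj.homEquiv X Y (iL.app X ≫ f) ≫ iR.app Y := by
  simp [pairingAlpha, Adjunction.retractPairingUnit, Adjunction.homEquiv_unit]

theorem pairingBeta_retractPairingCounit {X : A} {Y : B} (g : X ⟶ R.obj Y) :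
    pairingBeta L R (adj.retractPairingCounit pL pR) g =
      pL.app X ≫ (adj.homEquiv X Y).symm (g ≫ pR.app Y) := by
  simp [pairingBeta, Adjunction.retractPairingCounit, Adjunction.homEquiv_counit]

theorem pairingBeta_pairingAlpha_retractPairing
    (hiR : ∀ Y : B, iR.app Y ≫ pR.app Y = 𝟙 (R'.obj Y)) {X : A} {Y : B} (f : L.obj X ⟶ Y) :
    pairingBeta L R (adj.retractPairingCounit pL pR)
      (pairingAlpha L R (adj.retractPairingUnit iL iR) f) = pL.app X ≫ iL.app X ≫ f := by
  simp [pairingAlpha_retractPairingUnit, pairingBeta_retractPairingCounit, hiR]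

theorem pairingAlpha_pairingBeta_retractPairing
    (hiL : ∀ X : A, iL.app X ≫ pL.app X = 𝟙 (L'.obj X)) {X : A} {Y : B} (g : X ⟶ R.obj Y) :
    pairingAlpha L R (adj.retractPairingUnit iL iR)
      (pairingBeta L R (adj.retractPairingCounit pL pR) g) = g ≫ pR.app Y ≫ iR.app Y := by
  simp [pairingAlpha_retractPairingUnit, pairingBeta_retractPairingCounit, reassoc_of% hiL]

theorem pairingEll_retractPairing (hiR : ∀ Y : B, iR.app Y ≫ pR.app Y = 𝟙 (R'.obj Y)) (X : A) :
    pairingEll L R (adj.retractPairingUnit iL iR) (adj.retractPairingCounit pL pR) X =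
      pL.app X ≫ iL.app X := by
  simpa using (pairingBeta_pairingAlpha _ _ (𝟙 (L.obj X))).symm.trans
    (pairingBeta_pairingAlpha_retractPairing adj hiR (𝟙 (L.obj X)))

theorem pairingR_retractPairing (hiL : ∀ X : A, iL.app X ≫ pL.app X = 𝟙 (L'.obj X)) (Y : B) :
    pairingR L R (adj.retractPairingUnit iL iR) (adj.retractPairingCounit pL pR) Y =
      pR.app Y ≫ iR.app Y := by
  simpa using (pairingAlpha_pairingBeta _ _ (𝟙 (R.obj Y))).symm.trans
    (pairingAlpha_pairingBeta_retractPairing adj hiL (𝟙 (R.obj Y)))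

theorem isRegularPairing_retractPairing (hiL : ∀ X : A, iL.app X ≫ pL.app X = 𝟙 (L'.obj X))
    (hiR : ∀ Y : B, iR.app Y ≫ pR.app Y = 𝟙 (R'.obj Y)) :
    IsRegularPairing L R (adj.retractPairingUnit iL iR) (adj.retractPairingCounit pL pR) := by
  refine ⟨fun X Y f => ?_, fun X Y g => ?_⟩
  · rw [pairingBeta_pairingAlpha_retractPairing adj hiR, pairingAlpha_retractPairingUnit,
      pairingAlpha_retractPairingUnit, reassoc_of% hiL]
  · rw [pairingAlpha_pairingBeta_retractPairing adj hiL, pairingBeta_retractPairingCounit,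
      pairingBeta_retractPairingCounit, Category.assoc, Category.assoc, hiR, Category.comp_id]

end

end

/-- `(L, R)` admits regular pairings in both directions with splitting
idempotents satisfying `ℓ = ℓ̃`, `r = r̃` iff there are retractions onto `L'`, `R'`
such that `(L', R')` is a Frobenius pair of functors. -/
theorem regular_pairings_both_split_iff_frobenius_retract :
    (∃ (η : 𝟭 A ⟶ L ⋙ R) (ε : R ⋙ L ⟶ 𝟭 B) (ηt : 𝟭 B ⟶ R ⋙ L) (εt : L ⋙ R ⟶ 𝟭 A),
      (∀ (X : A) (Y : B) (f : L.obj X ⟶ Y),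
        pairingAlpha L R η (pairingBeta L R ε (pairingAlpha L R η f)) = pairingAlpha L R η f) ∧
      (∀ (X : A) (Y : B) (g : X ⟶ R.obj Y),
        pairingBeta L R ε (pairingAlpha L R η (pairingBeta L R ε g)) = pairingBeta L R ε g) ∧
      (∀ (Y : B) (X : A) (f : R.obj Y ⟶ X),
        pairingAlphaT L R ηt (pairingBetaT L R εt (pairingAlphaT L R ηt f))
          = pairingAlphaT L R ηt f) ∧
      (∀ (Y : B) (X : A) (g : Y ⟶ L.obj X),
        pairingBetaT L R εt (pairingAlphaT L R ηt (pairingBetaT L R εt g))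
          = pairingBetaT L R εt g) ∧
      (∀ X : A, pairingEll L R η ε X = pairingEllT L R ηt εt X) ∧
      (∀ Y : B, pairingR L R η ε Y = pairingRT L R ηt εt Y) ∧
      (∃ (L' : A ⥤ B) (pL : L ⟶ L') (iL : L' ⟶ L),
        (∀ X : A, pL.app X ≫ iL.app X = pairingEll L R η ε X) ∧
        (∀ X : A, iL.app X ≫ pL.app X = 𝟙 (L'.obj X))) ∧
      (∃ (R' : B ⥤ A) (pR : R ⟶ R') (iR : R' ⟶ R),
        (∀ Y : B, pR.app Y ≫ iR.app Y = pairingR L R η ε Y) ∧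
        (∀ Y : B, iR.app Y ≫ pR.app Y = 𝟙 (R'.obj Y))))
    ↔
    (∃ (L' : A ⥤ B) (R' : B ⥤ A) (iL : L' ⟶ L) (pL : L ⟶ L')
        (iR : R' ⟶ R) (pR : R ⟶ R'),
      (∀ X : A, iL.app X ≫ pL.app X = 𝟙 (L'.obj X)) ∧
      (∀ Y : B, iR.app Y ≫ pR.app Y = 𝟙 (R'.obj Y)) ∧
      Nonempty (L' ⊣ R') ∧ Nonempty (R' ⊣ L')) := by
  constructor
  · rintro ⟨η, ε, ηt, εt, hα, hβ, hαt, hβt, hℓ, hr, ⟨L', pL, iL, hpL, hiL⟩,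
      ⟨R', pR, iR, hpR, hiR⟩⟩
    -- `pairingEll R L ηt εt` and `pairingR R L ηt εt` unfold to `pairingRT` and `pairingEllT`.
    exact ⟨L', R', iL, pL, iR, pR, hiL, hiR,
      ⟨adjunctionOfSplitRegularPairing ⟨hα, hβ⟩ hpL hiL hpR hiR⟩,
      ⟨adjunctionOfSplitRegularPairing ⟨hαt, hβt⟩ (fun Y => (hpR Y).trans (hr Y)) hiR
        (fun X => (hpL X).trans (hℓ X)) hiL⟩⟩
  · rintro ⟨L', R', iL, pL, iR, pR, hiL, hiR, ⟨adj⟩, ⟨adj'⟩⟩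
    obtain ⟨hα, hβ⟩ := isRegularPairing_retractPairing adj hiL hiR
    obtain ⟨hαt, hβt⟩ := isRegularPairing_retractPairing adj' hiR hiL
    refine ⟨adj.retractPairingUnit iL iR, adj.retractPairingCounit pL pR,
      adj'.retractPairingUnit iR iL, adj'.retractPairingCounit pR pL,
      hα, hβ, hαt, hβt, fun X => ?_, fun Y => ?_,
      ⟨L', pL, iL, fun X => (pairingEll_retractPairing adj hiR X).symm, hiL⟩,
      ⟨R', pR, iR, fun Y => (pairingR_retractPairing adj hiL Y).symm, hiR⟩⟩
    · exact (pairingEll_retractPairing adj hiR X).trans (pairingR_retractPairing adj' hiR X).symm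
    · exact (pairingR_retractPairing adj hiL Y).trans (pairingEll_retractPairing adj' hiL Y).symm

end
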